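/- arXiv:1108.2983 — 7 statements merged into one kernel-verified Lean document; each statement's English description precedes it below -/
import Mathlib

section
/- For every integer m and real x, the series ∑_{n∈ℤ} (sin(π(x−n))/(π(x−n)))² converges and equals 1 (where the term at n = x, if x is an integer, is interpreted as 1). -/
open Real

noncomputable def sinc (t : ℝ) : ℝ := if t = 0 then 1 else Real.sin (π * t) / (π * t)

/-!
`sinc (x - n)` is the `n`-th Fourier coefficient on `[-1/2, 1/2]` of `t ↦ exp (2πixt)`, a function
of modulus one, so Parseval's identity gives `∑ₙ sinc (x - n)² = ∫_{-1/2}^{1/2} 1 = 1`.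
-/

open Complex MeasureTheory

lemma sinc_eq_sinc_pi_mul (t : ℝ) : _root_.sinc t = Real.sinc (π * t) := by
  rcases eq_or_ne t 0 with rfl | ht
  · simp [_root_.sinc]
  · rw [_root_.sinc, if_neg ht, Real.sinc_of_ne_zero (mul_ne_zero pi_ne_zero ht)]

lemma integral_exp_two_pi_mul_I_eq_sinc (y : ℝ) :
    ∫ t in (-1/2 : ℝ)..1/2, cexp (↑(2 * π * y * t) * I) = _root_.sinc y := by
  rcases eq_or_ne y 0 with rfl | hy
  · norm_num [_root_.sinc]
  have hc : 2 * π * y ≠ 0 := by positivity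
  rw [intervalIntegral.integral_comp_mul_left (fun u : ℝ => cexp (u * I)) hc,
    show 2 * π * y * (-1/2) = -(π * y) by ring, show 2 * π * y * (1/2) = π * y by ring,
    integral_exp_mul_I_eq_sinc, sinc_eq_sinc_pi_mul, Complex.real_smul]
  push_cast
  field_simp [ofReal_ne_zero.mpr hy]

lemma fourierCoeffOn_exp_two_pi_mul_I (x : ℝ) (n : ℤ) :
    fourierCoeffOn (by norm_num : (-1/2 : ℝ) < 1/2) (fun t : ℝ => cexp (↑(2 * π * x * t) * I)) n =
      _root_.sinc (x - n) := by
  rw [fourierCoeffOn_eq_integral, ← integral_exp_two_pi_mul_I_eq_sinc]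
  norm_num only [one_smul]
  congr 1 with t
  rw [fourier_coe_apply, smul_eq_mul, ← Complex.exp_add]
  push_cast
  ring_nf

theorem sum_sinc_sq (x : ℝ) : HasSum (fun n : ℤ => (_root_.sinc (x - n)) ^ 2) 1 := by
  have hnorm (t : ℝ) : ‖cexp (↑(2 * π * x * t) * I)‖ = 1 := norm_exp_ofReal_mul_I _
  have hL2 : MemLp (fun t : ℝ => cexp (↑(2 * π * x * t) * I)) 2
      (volume.restrict (Set.Ioc (-1/2) (1/2))) :=
    MemLp.of_bound (by fun_prop) 1 (ae_of_all _ fun t => (hnorm t).le)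
  convert hasSum_sq_fourierCoeffOn (by norm_num : (-1/2 : ℝ) < 1/2) hL2 using 1
  · ext n
    rw [fourierCoeffOn_exp_two_pi_mul_I, norm_real, norm_eq_abs, sq_abs]
  · simp only [hnorm]
    norm_num
end

section
/- The series ∑_{n∈ℤ} |sinc(z−n)|² converges uniformly on compact subsets of the complex plane. -/
open Real Complex Filter

noncomputable def csinc (w : ℂ) : ℂ :=
  if w = 0 then 1 else Complex.sin (π * w) / (π * w)

/-!
Weierstrass M-test. On a compact set inside `‖z‖ ≤ R`, the shift `w = z - n` has `|Im w| ≤ R` and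
`‖w‖ ≥ |n| / 2` once `|n| > 2R`, so `|sin (π w)| ≤ exp (π R)` gives
`|sinc (z - n)|² ≤ (2 exp (π R))² / n²` for all but finitely many `n`, and `∑ 1 / n²` converges.
-/

theorem Complex.norm_sin_le_exp_abs_im (u : ℂ) : ‖Complex.sin u‖ ≤ Real.exp |u.im| := by
  have h_neg : ‖Complex.exp (-u * I)‖ = Real.exp u.im := by simp [Complex.norm_exp]
  have h_pos : ‖Complex.exp (u * I)‖ = Real.exp (-u.im) := by simp [Complex.norm_exp]
  calc ‖Complex.sin u‖ = ‖Complex.exp (-u * I) - Complex.exp (u * I)‖ / 2 := by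
        simp [Complex.sin]
    _ ≤ (Real.exp u.im + Real.exp (-u.im)) / 2 := by
        rw [← h_neg, ← h_pos]; gcongr; exact norm_sub_le _ _
    _ ≤ Real.exp |u.im| := by
        linarith [Real.exp_le_exp.mpr (le_abs_self u.im), Real.exp_le_exp.mpr (neg_le_abs u.im)]

theorem norm_csinc_le {w : ℂ} (hw : w ≠ 0) :
    ‖csinc w‖ ≤ Real.exp (π * |w.im|) / (π * ‖w‖) := by
  have him : |((π : ℂ) * w).im| = π * |w.im| := by
    simp [abs_mul, abs_of_pos Real.pi_pos]
  rw [csinc, if_neg hw, norm_div, norm_mul, Complex.norm_real, Real.norm_of_nonneg Real.pi_pos.le,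
    ← him]
  gcongr
  exact Complex.norm_sin_le_exp_abs_im _

theorem norm_csinc_sub_intCast_le {R : ℝ} {z : ℂ} (hz : ‖z‖ ≤ R) {n : ℤ} (hn : 2 * R < |(n : ℝ)|) :
    ‖csinc (z - n)‖ ≤ 2 * Real.exp (π * R) / |(n : ℝ)| := by
  have hR : 0 ≤ R := (norm_nonneg z).trans hz
  have hn_pos : 0 < |(n : ℝ)| := by linarith
  have h_far : |(n : ℝ)| / 2 ≤ ‖z - n‖ := by
    have := norm_sub_norm_le (n : ℂ) z
    rw [norm_sub_rev, Complex.norm_intCast] at this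
    linarith
  have h_im : |(z - n).im| ≤ R := by
    simpa using (Complex.abs_im_le_norm z).trans hz
  have hw : z - n ≠ 0 := norm_pos_iff.mp (by linarith)
  calc ‖csinc (z - n)‖ ≤ Real.exp (π * |(z - n).im|) / (π * ‖z - n‖) := norm_csinc_le hw
    _ ≤ Real.exp (π * R) / (1 * (|(n : ℝ)| / 2)) := by
        gcongr
        linarith [Real.pi_gt_three]
    _ = 2 * Real.exp (π * R) / |(n : ℝ)| := by field_simp

/-- The series `∑_{n∈ℤ} |sinc(z−n)|²` converges uniformly on compact subsets of `ℂ`. -/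
theorem sum_abs_csinc_sq_tendstoUniformlyOn (K : Set ℂ) (hK : IsCompact K) :
    TendstoUniformlyOn
      (fun (s : Finset ℤ) (z : ℂ) => ∑ n ∈ s, ‖csinc (z - n)‖ ^ 2)
      (fun z => ∑' n : ℤ, ‖csinc (z - n)‖ ^ 2)
      atTop K := by
  obtain ⟨R, hR⟩ := hK.isBounded.subset_closedBall 0
  have h_far : ∀ᶠ n : ℤ in cofinite, 2 * R < |(n : ℝ)| :=
    (tendsto_norm_cocompact_atTop.comp Int.tendsto_coe_cofinite).eventually_gt_atTop _
  refine tendstoUniformlyOn_tsum_of_cofinite_eventually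
    ((Real.summable_one_div_int_pow.mpr one_lt_two).mul_left ((2 * Real.exp (π * R)) ^ 2)) ?_
  filter_upwards [h_far] with n hn z hz
  have hzR : ‖z‖ ≤ R := by simpa using hR hz
  rw [norm_pow, norm_norm]
  calc ‖csinc (z - n)‖ ^ 2 ≤ (2 * Real.exp (π * R) / |(n : ℝ)|) ^ 2 := by
        gcongr
        exact norm_csinc_sub_intCast_le hzR hn
    _ = (2 * Real.exp (π * R)) ^ 2 * (1 / (n : ℝ) ^ 2) := by
        rw [div_pow, sq_abs]; ring
end

section
/- There exists a constant C > 0 such that for all sufficiently large natural numbers N and all real x with |x| ≤ N, one has 1 − C/N ≤ ∑_{n=−2N}^{2N} sinc(x−n) ≤ 1 + C/N. -/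
/-!
Pairing `n` with `-n`, the terms `(sinc (x - n) + sinc (x + n)) / 2` are the Fourier coefficients
of `t ↦ cos (2πxt)` on `[-1/2, 1/2]`; they are `O(1/n²)`, so the Fourier series converges at
`t = 0` to `cos 0 = 1`, i.e. the symmetric partial sums of `∑ sinc (x - n)` tend to `1`.
The sum over `[-2N, 2N]` differs from these partial sums by two tails. Since
`sinc (x - n) = (-1)ⁿ sin (πx) / (π (x - n))`, each tail is an alternating series with
decreasing terms, hence bounded by its first term, which is at most `1 / (π (N + 1))` when
`|x| ≤ N`.
-/

open Real hiding sinc sinc_neg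
open Finset Filter

lemma sinc_neg (t : ℝ) : sinc (-t) = sinc t := by
  rcases eq_or_ne t 0 with rfl | ht
  · simp
  · simp only [sinc, neg_eq_zero, if_neg ht, mul_neg, Real.sin_neg, neg_div_neg_eq]

lemma sinc_sub_int {x : ℝ} {m : ℤ} (h : x ≠ m) :
    sinc (x - m) = (-1) ^ m * sin (π * x) / (π * (x - m)) := by
  rw [sinc, if_neg (sub_ne_zero.mpr h), show π * (x - m) = π * x - m * π by ring,
    sin_sub_int_mul_pi]

lemma integral_cexp_eq_sinc (v : ℝ) :
    ∫ t in (-1/2 : ℝ)..1/2, Complex.exp (2 * π * Complex.I * v * t) = sinc v := by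
  rcases eq_or_ne v 0 with rfl | hv
  · norm_num [sinc]
  have hc : (2 * π * Complex.I * v : ℂ) ≠ 0 := by simp [pi_ne_zero, hv]
  rw [integral_exp_mul_complex hc, sinc, if_neg hv]
  have hv' : (v : ℂ) ≠ 0 := by exact_mod_cast hv
  push_cast
  rw [show 2 * π * Complex.I * v * (1 / 2) = π * v * Complex.I by ring,
    show 2 * π * Complex.I * v * (-1 / 2) = -(π * v) * Complex.I by ring, Complex.exp_mul_I,
    Complex.exp_mul_I, Complex.cos_neg, Complex.sin_neg]
  field_simp
  ring

lemma fourierCoeffOn_cos (u : ℝ) (n : ℤ) :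
    fourierCoeffOn (by norm_num : (-1/2 : ℝ) < 1/2) (fun t => Complex.cos (2 * π * u * t)) n =
      ((sinc (u - n) + sinc (u + n)) / 2 : ℝ) := by
  have hexp (x : ℝ) :
      fourier (-n) (x : AddCircle (1/2 - (-1/2) : ℝ)) • Complex.cos (2 * π * u * x) =
      (Complex.exp (2 * π * Complex.I * ((u - n : ℝ) : ℂ) * x) +
        Complex.exp (2 * π * Complex.I * ((-(u + n) : ℝ) : ℂ) * x)) / 2 := by
    rw [fourier_coe_apply, Complex.cos, smul_eq_mul, mul_div_assoc', mul_add, ← Complex.exp_add,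
      ← Complex.exp_add]
    congr 3 <;> push_cast <;> ring
  have hint (v : ℝ) : IntervalIntegrable (fun x : ℝ => Complex.exp (2 * π * Complex.I * v * x))
      MeasureTheory.volume (-1/2) (1/2) := by
    apply Continuous.intervalIntegrable; fun_prop
  rw [fourierCoeffOn_eq_integral]
  simp_rw [hexp]
  rw [intervalIntegral.integral_div, intervalIntegral.integral_add (hint _) (hint _),
    integral_cexp_eq_sinc, integral_cexp_eq_sinc, sinc_neg]
  norm_num

lemma sinc_sub_add_sinc_add {u : ℝ} {n : ℤ} (h : u ^ 2 ≠ n ^ 2) :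
    sinc (u - n) + sinc (u + n) = (-1) ^ n * sin (π * u) * (2 * u) / (π * (u ^ 2 - n ^ 2)) := by
  have h₁ : u - n ≠ 0 := fun e => h (by rw [sub_eq_zero.mp e])
  have h₂ : u + n ≠ 0 := fun e => h (by rw [eq_neg_of_add_eq_zero_left e, neg_sq])
  have h₃ : u ^ 2 - n ^ 2 ≠ 0 := sub_ne_zero.mpr h
  have hsub := sinc_sub_int (sub_ne_zero.mp h₁)
  have hadd := sinc_sub_int (x := u) (m := -n) (by push_cast; intro e; exact h₂ (by linarith))
  rw [zpow_neg, ← inv_zpow, inv_neg_one] at hadd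
  push_cast at hadd
  rw [sub_neg_eq_add] at hadd
  rw [hsub, hadd]
  field_simp
  ring

lemma abs_sinc_sub_add_sinc_add_le {u : ℝ} {n : ℤ} (h : u ^ 2 < n ^ 2) :
    |sinc (u - n) + sinc (u + n)| ≤ 2 * |u| / (π * (n ^ 2 - u ^ 2)) := by
  rw [sinc_sub_add_sinc_add h.ne, abs_div, abs_mul, abs_mul, abs_neg_one_zpow, one_mul, abs_mul,
    abs_two, abs_mul, abs_of_pos pi_pos, abs_sub_comm, abs_of_pos (sub_pos.mpr h)]
  gcongr ?_ / _
  exact mul_le_of_le_one_left (by positivity) (abs_sin_le_one _)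

lemma summable_sinc_sub_add_sinc_add (u : ℝ) :
    Summable fun n : ℤ => sinc (u - n) + sinc (u + n) := by
  refine .of_norm_bounded_eventually ((summable_one_div_int_pow.mpr one_lt_two).mul_left
    (4 * |u| / π)) ?_
  filter_upwards [(tendsto_norm_comp_cofinite_atTop_of_isClosedEmbedding
    Int.isClosedEmbedding_coe_real).eventually_ge_atTop (2 * |u| + 1)] with n hn
  simp only [Function.comp_apply, Real.norm_eq_abs] at hn
  have hn2 : 4 * u ^ 2 + 1 ≤ (n : ℝ) ^ 2 := by
    rw [← sq_abs (n : ℝ), ← sq_abs u]; nlinarith [abs_nonneg u]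
  rw [Real.norm_eq_abs]
  refine (abs_sinc_sub_add_sinc_add_le (by nlinarith)).trans ?_
  rw [div_mul_div_comm, mul_one, div_le_div_iff₀ (by nlinarith [pi_pos]) (by nlinarith [pi_pos])]
  nlinarith [pi_pos, abs_nonneg u, mul_nonneg pi_pos.le (abs_nonneg u)]

lemma hasSum_sinc_sub_add_sinc_add (u : ℝ) :
    HasSum (fun n : ℤ => (sinc (u - n) + sinc (u + n)) / 2) 1 := by
  have : Fact ((0 : ℝ) < 1) := ⟨one_pos⟩
  set f : ℝ → ℂ := fun t => Complex.cos (2 * π * u * t)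
  have hper : f (-1/2) = f (-1/2 + 1) := by
    simp only [f]; rw [← Complex.cos_neg]; congr 1; push_cast; ring
  let F : C(AddCircle (1 : ℝ), ℂ) :=
    ⟨AddCircle.liftIco 1 (-1/2) f, AddCircle.liftIco_continuous hper (by fun_prop)⟩
  have hcoeff (n : ℤ) : fourierCoeff F n = ((sinc (u - n) + sinc (u + n)) / 2 : ℝ) := by
    rw [← fourierCoeffOn_cos, ContinuousMap.coe_mk, fourierCoeff_liftIco_eq]
    congr 1; norm_num
  have hF : F 0 = 1 := by
    show AddCircle.liftIco 1 (-1/2) f ((0 : ℝ) : AddCircle (1 : ℝ)) = 1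
    rw [AddCircle.liftIco_coe_apply (by norm_num)]
    simp [f]
  have hsum : Summable (fourierCoeff F) := by
    simp_rw [funext hcoeff]
    exact Complex.ofRealCLM.summable ((summable_sinc_sub_add_sinc_add u).div_const 2)
  have := has_pointwise_sum_fourier_series_of_summable hsum 0
  simp only [hF, fourier_eval_zero, smul_eq_mul, mul_one, hcoeff] at this
  rwa [← Complex.ofReal_one, Complex.hasSum_ofReal] at this

lemma sum_Icc_sinc_sub_neg (x : ℝ) (a b : ℤ) :
    ∑ m ∈ Icc a b, sinc (x - m) = ∑ m ∈ Icc (-b) (-a), sinc (-x - m) := by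
  refine sum_nbij' (fun m => -m) (fun m => -m) ?_ ?_ (fun _ _ => neg_neg _)
    (fun _ _ => neg_neg _) fun m _ => ?_
  · intro m hm; simp only [mem_Icc] at hm ⊢; omega
  · intro m hm; simp only [mem_Icc] at hm ⊢; omega
  · rw [← sinc_neg]; push_cast; ring_nf

theorem hasSum_sinc_sub (x : ℝ) :
    HasSum (fun n : ℤ => sinc (x - n)) 1 (SummationFilter.symmetricIcc ℤ) := by
  have : HasSum (fun n : ℤ => (sinc (x - n) + sinc (x + n)) / 2) 1
      (SummationFilter.symmetricIcc ℤ) :=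
    (hasSum_sinc_sub_add_sinc_add x).mono_left (SummationFilter.symmetricIcc ℤ).le_atTop
  rw [SummationFilter.hasSum_symmetricIcc_iff] at this ⊢
  refine this.congr fun N => ?_
  have hadd :
      ∑ n ∈ Icc (-(N : ℤ)) N, sinc (x + n) = ∑ n ∈ Icc (-(N : ℤ)) N, sinc (x - n) := by
    simp_rw [← sinc_neg (x + _), neg_add', sum_Icc_sinc_sub_neg (-x), neg_neg]
  rw [← sum_div, sum_add_distrib, hadd, add_self_div_two]

lemma sum_range_neg_one_pow_mul_mem_Icc {R : Type*} [CommRing R] [LinearOrder R]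
    [IsStrictOrderedRing R] {g : ℕ → R} (hg : Antitone g) (hg₀ : 0 ≤ g) (n : ℕ) :
    ∑ i ∈ range n, (-1) ^ i * g i ∈ Set.Icc 0 (g 0) := by
  induction n generalizing g with
  | zero => simpa using hg₀ 0
  | succ n ih =>
    obtain ⟨h₀, h₁⟩ := ih (g := fun i => g (i + 1)) (hg.comp_monotone fun _ _ h => by omega)
      (fun i => hg₀ (i + 1))
    have h₂ : g 1 ≤ g 0 := hg zero_le_one
    simp only [sum_range_succ', pow_succ, pow_zero, mul_neg_one, neg_mul, sum_neg_distrib,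
      one_mul] at h₀ h₁ ⊢
    constructor <;> linarith

lemma abs_sum_Icc_sinc_sub_le_of_lt {x : ℝ} {a : ℤ} (hxa : x < a) (b : ℤ) :
    |∑ m ∈ Icc a b, sinc (x - m)| ≤ 1 / (π * (a - x)) := by
  set s := (-1) ^ a * sin (π * x) / π
  set g : ℕ → ℝ := fun i => 1 / (a + i - x)
  have hpos (i : ℕ) : 0 < a + i - x := by linarith [(i.cast_nonneg : (0 : ℝ) ≤ i)]
  have hg : Antitone g := fun i j hij => by
    simp only [g]; gcongr
    exact hpos i
  have hterm (i : ℕ) : sinc (x - (a + i : ℤ)) = -s * ((-1) ^ i * g i) := by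
    have hx : x ≠ (a + i : ℤ) := by push_cast; linarith [hpos i]
    rw [sinc_sub_int hx, zpow_add₀ (by norm_num), zpow_natCast]
    have h₁ : x - (a + i) ≠ 0 := by linarith [hpos i]
    have h₂ : (a + i - x : ℝ) ≠ 0 := (hpos i).ne'
    simp only [s, g]; push_cast
    field_simp
    ring
  have hs : |s| ≤ 1 / π := by
    simp only [s, abs_div, abs_mul, abs_neg_one_zpow, one_mul, abs_of_pos pi_pos]
    gcongr; exact abs_sin_le_one _
  obtain ⟨h₀, h₁⟩ := sum_range_neg_one_pow_mul_mem_Icc hg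
    (fun i => (one_div_pos.mpr (hpos i)).le) (b + 1 - a).toNat
  rw [Int.Icc_eq_finset_map, sum_map]
  simp only [Function.Embedding.trans_apply, Nat.castEmbedding_apply, addLeftEmbedding_apply,
    hterm, ← mul_sum, abs_mul, abs_neg, abs_of_nonneg h₀]
  calc |s| * ∑ i ∈ range (b + 1 - a).toNat, (-1) ^ i * g i ≤ 1 / π * g 0 := by gcongr
    _ = 1 / (π * (a - x)) := by simp only [g, CharP.cast_eq_zero, add_zero, one_div_mul_one_div]

lemma abs_sum_Icc_sinc_sub_le_of_gt {x : ℝ} {b : ℤ} (hbx : b < x) (a : ℤ) :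
    |∑ m ∈ Icc a b, sinc (x - m)| ≤ 1 / (π * (x - b)) := by
  rw [sum_Icc_sinc_sub_neg]
  convert abs_sum_Icc_sinc_sub_le_of_lt (x := -x) (a := -b) (by push_cast; linarith) (-a) using 3
  push_cast; ring

lemma sum_Icc_eq_sum_Icc_add_sum_Icc {M : Type*} [AddCommMonoid M] (f : ℤ → M) {p q r : ℤ}
    (hpq : p ≤ q) (hqr : q ≤ r + 1) :
    ∑ m ∈ Icc p r, f m = ∑ m ∈ Icc p (q - 1), f m + ∑ m ∈ Icc q r, f m := by
  have hdisj : Disjoint (Icc p (q - 1)) (Icc q r) :=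
    disjoint_left.mpr fun m h₁ h₂ => by simp only [mem_Icc] at h₁ h₂; omega
  rw [← sum_union hdisj]
  congr 1
  ext m; simp only [mem_union, mem_Icc]; omega

theorem abs_sum_Icc_sinc_sub_sub_one_le {x : ℝ} {a b : ℤ} (ha : a - 1 < x) (hb : x < b + 1) :
    |∑ m ∈ Icc a b, sinc (x - m) - 1| ≤ 1 / (π * (x - a + 1)) + 1 / (π * (b + 1 - x)) := by
  have hab : a ≤ b + 1 := by
    have : (a : ℝ) < b + 1 + 1 := by linarith
    exact Int.lt_add_one_iff.mp (by exact_mod_cast this)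
  have hlim := ((SummationFilter.hasSum_symmetricIcc_iff.mp (hasSum_sinc_sub x)).const_sub
    (∑ m ∈ Icc a b, sinc (x - m))).abs
  refine le_of_tendsto hlim ?_
  filter_upwards [eventually_ge_atTop a.natAbs, eventually_ge_atTop b.natAbs] with N haN hbN
  rw [sum_Icc_eq_sum_Icc_add_sum_Icc _ (p := -N) (q := a) (r := N) (by omega) (by omega),
    sum_Icc_eq_sum_Icc_add_sum_Icc _ (p := a) (q := b + 1) (r := N) hab (by omega),
    add_sub_cancel_right, ← add_assoc,
    show ∀ L S R : ℝ, S - (L + S + R) = -(L + R) from fun _ _ _ => by ring, abs_neg]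
  have hleft := abs_sum_Icc_sinc_sub_le_of_gt (x := x) (b := a - 1) (by push_cast; linarith) (-N)
  have hright := abs_sum_Icc_sinc_sub_le_of_lt (x := x) (a := b + 1) (by push_cast; linarith) N
  push_cast at hleft hright
  rw [sub_sub_eq_add_sub, add_sub_right_comm] at hleft
  exact (abs_add_le _ _).trans (add_le_add hleft hright)

theorem f0_close_to_one :
    ∃ C > (0 : ℝ), ∃ N₀ : ℕ, ∀ N : ℕ, N₀ ≤ N → ∀ x : ℝ, |x| ≤ N →
      1 - C / N ≤ ∑ n ∈ Finset.Icc (-(2 * N : ℤ)) (2 * N), _root_.sinc (x - n) ∧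
      ∑ n ∈ Finset.Icc (-(2 * N : ℤ)) (2 * N), _root_.sinc (x - n) ≤ 1 + C / N := by
  refine ⟨1, one_pos, 1, fun N hN x hx => ?_⟩
  have hN' : (1 : ℝ) ≤ N := by exact_mod_cast hN
  obtain ⟨hx₁, hx₂⟩ := abs_le.mp hx
  have hsum := abs_sum_Icc_sinc_sub_sub_one_le (x := x) (a := -(2 * N : ℤ)) (b := 2 * N)
    (by push_cast; linarith) (by push_cast; linarith)
  have htail {y : ℝ} (hy : N + 1 ≤ y) : 1 / (π * y) ≤ 1 / N / 2 := by
    rw [div_div]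
    exact one_div_le_one_div_of_le (by positivity) (by nlinarith [pi_gt_three])
  push_cast at hsum
  have h₁ := htail (y := x - -(2 * N) + 1) (by linarith)
  have h₂ := htail (y := 2 * N + 1 - x) (by linarith)
  rw [abs_le] at hsum
  constructor <;> linarith [hsum.1, hsum.2]
end

section
/- There is an absolute constant C > 0 with the following property. Let N ∈ ℕ, ε > 0, and let (b_n)_{−2N ≤ n ≤ 2N} be real numbers with partial sums B_n = b_{−2N} + ⋯ + b_n. If |b_n| ≤ ε and |B_n| ≤ ε for all |n| ≤ 2N, then for every real x with |x| ≤ N, |sin(πx)/π · ∑_{n=−2N}^{2N} b_n/(x−n)| ≤ Cε, where at an integer x = k the expression is interpreted by its continuous extension. -/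
open Real

lemma sinc_abs_le_one (t : ℝ) : |_root_.sinc t| ≤ 1 := by
  unfold _root_.sinc
  split
  · norm_num
  · rw [abs_div]
    exact div_le_one_of_le₀ Real.abs_sin_le_abs (abs_nonneg _)

lemma sinc_int (n : ℤ) (hn : n ≠ 0) : _root_.sinc n = 0 := by
  unfold _root_.sinc
  rw [if_neg (by exact_mod_cast hn)]
  have : Real.sin (π * n) = 0 := by
    rw [mul_comm]; exact Real.sin_int_mul_pi n
  simp [this]

lemma H_abs (t : ℝ) (h0 : t ≠ 0) (h1 : t ≠ 1) :
    |_root_.sinc t + _root_.sinc (t - 1)| = |Real.sin (π * t)| / (π * (|t| * |t - 1|)) := by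
  have h1' : t - 1 ≠ 0 := sub_ne_zero.mpr h1
  have hπ : (π : ℝ) ≠ 0 := Real.pi_ne_zero
  have hsin : Real.sin (π * (t - 1)) = -Real.sin (π * t) := by
    have : π * (t - 1) = π * t - π := by ring
    rw [this, Real.sin_sub_pi]
  have hform : _root_.sinc t + _root_.sinc (t - 1)
      = Real.sin (π * t) * (-(1 / (π * (t * (t - 1))))) := by
    unfold _root_.sinc
    rw [if_neg h0, if_neg h1', hsin]
    field_simp
    ring
  rw [hform, abs_mul, abs_neg, abs_div, abs_one, abs_mul, abs_mul,
    abs_of_pos Real.pi_pos]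
  rw [mul_one_div]

lemma H_le_two (t : ℝ) : |_root_.sinc t + _root_.sinc (t - 1)| ≤ 2 := by
  by_cases h0 : t = 0
  · subst h0
    have : _root_.sinc (0 - 1) = 0 := by
      have := sinc_int (-1) (by norm_num)
      simpa using this
    simp [this, _root_.sinc]
  by_cases h1 : t = 1
  · subst h1
    have : _root_.sinc (1:ℝ) = 0 := by
      have := sinc_int 1 (by norm_num)
      simpa using this
    simp [this, _root_.sinc]
  rw [H_abs t h0 h1]
  have h1' : t - 1 ≠ 0 := sub_ne_zero.mpr h1
  have hπ := Real.pi_pos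
  have ht : (0:ℝ) < |t| := abs_pos.mpr h0
  have ht1 : (0:ℝ) < |t - 1| := abs_pos.mpr h1'
  have hs1 : |Real.sin (π * t)| ≤ π * |t| := by
    calc |Real.sin (π * t)| ≤ |π * t| := Real.abs_sin_le_abs
      _ = π * |t| := by rw [abs_mul, abs_of_pos hπ]
  have hs2 : |Real.sin (π * t)| ≤ π * |t - 1| := by
    have hsin : Real.sin (π * (t - 1)) = -Real.sin (π * t) := by
      have : π * (t - 1) = π * t - π := by ring
      rw [this, Real.sin_sub_pi]
    calc |Real.sin (π * t)| = |Real.sin (π * (t-1))| := by rw [hsin, abs_neg]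
      _ ≤ |π * (t - 1)| := Real.abs_sin_le_abs
      _ = π * |t - 1| := by rw [abs_mul, abs_of_pos hπ]
  have hsum : (1:ℝ) ≤ |t| + |t - 1| := by
    have h := abs_sub t (t - 1)
    simp at h
    linarith [abs_sub_abs_le_abs_sub t (t-1), abs_add_le t (1 - t), abs_sub_comm t (t-1),
      abs_nonneg (t - (t-1))]
  rw [div_le_iff₀ (by positivity)]
  nlinarith [mul_le_mul_of_nonneg_right hs1 ht1.le, mul_le_mul_of_nonneg_right hs2 ht.le,
    mul_nonneg (abs_nonneg (Real.sin (π * t))) (by linarith : (0:ℝ) ≤ |t| + |t-1| - 1)]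

lemma H_far (t : ℝ) (h0 : t ≠ 0) (h1 : t ≠ 1) :
    |_root_.sinc t + _root_.sinc (t - 1)| ≤ 1 / (π * (|t| * |t - 1|)) := by
  rw [H_abs t h0 h1]
  have h1' : t - 1 ≠ 0 := sub_ne_zero.mpr h1
  have hπ := Real.pi_pos
  have ht : (0:ℝ) < |t| := abs_pos.mpr h0
  have ht1 : (0:ℝ) < |t - 1| := abs_pos.mpr h1'
  gcongr
  exact Real.abs_sin_le_one _

lemma tele1 (y c : ℝ) (h1 : y - c ≠ 0) (h2 : y - c - 1 ≠ 0) :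
    1 / (π * ((y - c) * (y - c - 1))) = 1 / (π * (y - c - 1)) - 1 / (π * (y - c)) := by
  have d1 : π * (y - c - 1) ≠ 0 := mul_ne_zero Real.pi_ne_zero h2
  have d2 : π * (y - c) ≠ 0 := mul_ne_zero Real.pi_ne_zero h1
  rw [div_sub_div _ _ d1 d2,
    div_eq_div_iff (mul_ne_zero Real.pi_ne_zero (mul_ne_zero h1 h2)) (mul_ne_zero d1 d2)]
  ring

lemma tele2 (c y : ℝ) (h1 : c - y ≠ 0) (h2 : c + 1 - y ≠ 0) :
    1 / (π * ((c - y) * (c + 1 - y))) = 1 / (π * (c - y)) - 1 / (π * (c + 1 - y)) := by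
  have d1 : π * (c - y) ≠ 0 := mul_ne_zero Real.pi_ne_zero h1
  have d2 : π * (c + 1 - y) ≠ 0 := mul_ne_zero Real.pi_ne_zero h2
  rw [div_sub_div _ _ d1 d2,
    div_eq_div_iff (mul_ne_zero Real.pi_ne_zero (mul_ne_zero h1 h2)) (mul_ne_zero d1 d2)]
  ring

lemma key_sum (y : ℝ) (L : ℕ) :
    ∑ i ∈ Finset.range L, |_root_.sinc (y - i) + _root_.sinc (y - i - 1)| ≤ 10 := by
  have hπ := Real.pi_pos
  have hπ1 : (1:ℝ) ≤ π := by linarith [Real.pi_gt_three]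
  set m : ℤ := ⌊y⌋ with hm
  have hym : (m:ℝ) ≤ y := Int.floor_le y
  have hym' : y < m + 1 := Int.lt_floor_add_one y
  set a : ℕ := min (m - 2).toNat L with ha
  set b : ℕ := min (m + 2).toNat L with hb
  have hab : a ≤ b := by rw [ha, hb]; omega
  have haL : a ≤ L := by rw [ha]; omega
  have hbL : b ≤ L := by rw [hb]; omega
  have hsplit : ∑ i ∈ Finset.range L, |_root_.sinc (y - i) + _root_.sinc (y - i - 1)|
      = ∑ i ∈ Finset.Ico 0 a, |_root_.sinc (y - i) + _root_.sinc (y - i - 1)|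
      + ∑ i ∈ Finset.Ico a b, |_root_.sinc (y - i) + _root_.sinc (y - i - 1)|
      + ∑ i ∈ Finset.Ico b L, |_root_.sinc (y - i) + _root_.sinc (y - i - 1)| := by
    rw [Finset.range_eq_Ico, ← Finset.sum_Ico_consecutive _ (Nat.zero_le b) hbL,
      ← Finset.sum_Ico_consecutive _ (Nat.zero_le a) hab]
  rw [hsplit]
  -- Right tail : indices i < a, so y - i ≥ 3
  have hT1 : ∑ i ∈ Finset.Ico 0 a, |_root_.sinc (y - i) + _root_.sinc (y - i - 1)| ≤ 1 := by
    rcases Nat.eq_zero_or_pos a with h0a | h0a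
    · simp [h0a]
    have haZ : (a : ℤ) ≤ m - 2 := by rw [ha] at h0a ⊢; omega
    have hy3 : (3:ℝ) ≤ y := by
      have : (3:ℤ) ≤ m := by omega
      have : (3:ℝ) ≤ (m:ℝ) := by exact_mod_cast this
      linarith
    have hstep : ∀ i ∈ Finset.Ico 0 a, |_root_.sinc (y - i) + _root_.sinc (y - i - 1)|
        ≤ 1 / (π * (y - (i+1:ℕ))) - 1 / (π * (y - i)) := by
      intro i hi
      simp only [Finset.mem_Ico] at hi
      have hiZ : (i : ℤ) < m - 2 := by
        have : i < a := hi.2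
        have := haZ
        omega
      have hiR : (i : ℝ) ≤ (m : ℝ) - 3 := by
        have : (i : ℤ) ≤ m - 3 := by omega
        have : ((i:ℤ) : ℝ) ≤ ((m - 3 : ℤ) : ℝ) := by exact_mod_cast this
        push_cast at this
        push_cast
        linarith
      have ht3 : (3:ℝ) ≤ y - i := by linarith
      have h0 : y - (i:ℝ) ≠ 0 := by linarith
      have h1 : y - (i:ℝ) ≠ 1 := by linarith
      calc |_root_.sinc (y - i) + _root_.sinc (y - i - 1)|
          ≤ 1 / (π * (|y - i| * |y - i - 1|)) := H_far _ h0 h1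
        _ = 1 / (π * (y - (i+1:ℕ))) - 1 / (π * (y - i)) := by
            rw [abs_of_pos (by linarith), abs_of_pos (by linarith)]
            rw [tele1 y (i:ℝ) h0 (by linarith)]
            rw [show y - ((i+1:ℕ):ℝ) = y - (i:ℝ) - 1 by push_cast; ring]
    calc ∑ i ∈ Finset.Ico 0 a, |_root_.sinc (y - i) + _root_.sinc (y - i - 1)|
        ≤ ∑ i ∈ Finset.Ico 0 a, (1 / (π * (y - (i+1:ℕ))) - 1 / (π * (y - i))) :=
          Finset.sum_le_sum hstep
      _ = 1 / (π * (y - a)) - 1 / (π * (y - (0:ℕ))) := by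
          rw [← Finset.range_eq_Ico]
          exact Finset.sum_range_sub (fun j => 1 / (π * (y - (j:ℕ)))) a
      _ ≤ 1 := by
          have haR : (a : ℝ) ≤ (m : ℝ) - 2 := by
            have : ((a:ℤ) : ℝ) ≤ ((m - 2 : ℤ) : ℝ) := by exact_mod_cast haZ
            push_cast at this ⊢
            linarith
          have h2 : (2:ℝ) ≤ y - a := by linarith
          have hpos : (0:ℝ) < π * (y - a) := by positivity
          have h1' : 1 / (π * (y - a)) ≤ 1 / (π * 2) := by
            apply one_div_le_one_div_of_le (by positivity)
            nlinarith
          have h2' : 0 ≤ 1 / (π * (y - (0:ℕ))) := by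
            simp only [Nat.cast_zero, sub_zero]
            positivity
          have : 1 / (π * 2) ≤ 1 := by
            rw [div_le_one (by positivity)]
            nlinarith
          linarith
  -- Middle : at most 4 terms, each ≤ 2
  have hT2 : ∑ i ∈ Finset.Ico a b, |_root_.sinc (y - i) + _root_.sinc (y - i - 1)| ≤ 8 := by
    have hcard : (Finset.Ico a b).card ≤ 4 := by
      rw [Nat.card_Ico, ha, hb]; omega
    calc ∑ i ∈ Finset.Ico a b, |_root_.sinc (y - i) + _root_.sinc (y - i - 1)|
        ≤ (Finset.Ico a b).card • (2:ℝ) :=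
          Finset.sum_le_card_nsmul _ _ _ (fun i _ => H_le_two (y - i))
      _ = ((Finset.Ico a b).card : ℝ) * 2 := by rw [nsmul_eq_mul]
      _ ≤ 4 * 2 := by
          have : ((Finset.Ico a b).card : ℝ) ≤ 4 := by exact_mod_cast hcard
          nlinarith
      _ = 8 := by norm_num
  -- Left tail : indices i ≥ b, so y - i < -1
  have hT3 : ∑ i ∈ Finset.Ico b L, |_root_.sinc (y - i) + _root_.sinc (y - i - 1)| ≤ 1 := by
    rcases lt_or_ge b L with hblt | hble
    swap
    · rw [Finset.Ico_eq_empty (by omega)]; norm_num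
    have hbZ : (m + 2 : ℤ) ≤ (b : ℤ) := by
      have hb' : b = (m + 2).toNat := by rw [hb] at hblt ⊢; omega
      rw [hb']
      exact Int.self_le_toNat _
    have hbR : (m : ℝ) + 2 ≤ (b : ℝ) := by
      have : ((m + 2 : ℤ) : ℝ) ≤ ((b:ℤ) : ℝ) := by exact_mod_cast hbZ
      push_cast at this
      linarith
    have hstep : ∀ i ∈ Finset.Ico b L, |_root_.sinc (y - i) + _root_.sinc (y - i - 1)|
        ≤ 1 / (π * (i - y)) - 1 / (π * ((i+1:ℕ) - y)) := by
      intro i hi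
      simp only [Finset.mem_Ico] at hi
      have hiR : (m : ℝ) + 2 ≤ (i : ℝ) := by
        have : (b:ℝ) ≤ (i:ℝ) := by exact_mod_cast hi.1
        linarith
      have hti : y - (i:ℝ) < -1 := by linarith
      have h0 : y - (i:ℝ) ≠ 0 := by linarith
      have h1 : y - (i:ℝ) ≠ 1 := by linarith
      calc |_root_.sinc (y - i) + _root_.sinc (y - i - 1)|
          ≤ 1 / (π * (|y - i| * |y - i - 1|)) := H_far _ h0 h1
        _ = 1 / (π * (i - y)) - 1 / (π * ((i+1:ℕ) - y)) := by
            rw [abs_of_neg (by linarith : y - (i:ℝ) < 0),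
              abs_of_neg (by linarith : y - (i:ℝ) - 1 < 0)]
            have hne1 : (i:ℝ) - y ≠ 0 := by linarith
            have hne2 : (i:ℝ) + 1 - y ≠ 0 := by linarith
            rw [show -(y - (i:ℝ)) * -(y - (i:ℝ) - 1) = ((i:ℝ) - y) * ((i:ℝ) + 1 - y) by ring]
            rw [tele2 (i:ℝ) y hne1 hne2]
            rw [show ((i+1:ℕ):ℝ) - y = (i:ℝ) + 1 - y by push_cast; ring]
    calc ∑ i ∈ Finset.Ico b L, |_root_.sinc (y - i) + _root_.sinc (y - i - 1)|
        ≤ ∑ i ∈ Finset.Ico b L, (1 / (π * (i - y)) - 1 / (π * ((i+1:ℕ) - y))) :=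
          Finset.sum_le_sum hstep
      _ = ∑ k ∈ Finset.range (L - b), (1 / (π * ((b+k:ℕ) - y)) - 1 / (π * ((b+k+1:ℕ) - y))) := by
          rw [Finset.sum_Ico_eq_sum_range]
      _ = 1 / (π * ((b+0:ℕ) - y)) - 1 / (π * ((b + (L-b):ℕ) - y)) := by
          exact Finset.sum_range_sub' (fun k => 1 / (π * ((b+k:ℕ) - y))) (L - b)
      _ ≤ 1 := by
          have hL' : (b + (L - b) : ℕ) = L := by omega
          rw [hL']
          simp only [Nat.add_zero]
          have h1b : (1:ℝ) ≤ (b:ℝ) - y := by linarith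
          have hLy : (0:ℝ) < (L:ℝ) - y := by
            have : (b:ℝ) ≤ (L:ℝ) := by exact_mod_cast hbL
            linarith
          have h1' : 1 / (π * ((b:ℝ) - y)) ≤ 1 / π := by
            rw [div_le_div_iff₀ (by positivity) hπ]
            nlinarith
          have h2' : 0 ≤ 1 / (π * ((L:ℝ) - y)) := by positivity
          have : 1 / π ≤ 1 := by
            rw [div_le_one hπ]; linarith
          linarith
  linarith

lemma reindex (N : ℕ) (F : ℤ → ℝ) (j : ℕ) :
    ∑ n ∈ Finset.Icc (-(2 * N : ℤ)) ((j : ℤ) - 2 * N), F n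
      = ∑ k ∈ Finset.range (j + 1), F ((k : ℤ) - 2 * N) := by
  apply Finset.sum_nbij' (i := fun n : ℤ => (n + 2 * N).toNat) (j := fun k : ℕ => (k : ℤ) - 2 * N)
  · intro n hn
    simp only [Finset.mem_Icc] at hn
    simp only [Finset.mem_range]
    omega
  · intro k hk
    simp only [Finset.mem_range] at hk
    simp only [Finset.mem_Icc]
    omega
  · intro n hn
    simp only [Finset.mem_Icc] at hn
    omega
  · intro k hk
    simp only [Finset.mem_range] at hk
    omega
  · intro n hn
    simp only [Finset.mem_Icc] at hn
    congr 1
    omega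

theorem middle_terms_bound :
    ∃ C > (0 : ℝ), ∀ (N : ℕ) (ε : ℝ), 0 < ε → ∀ b : ℤ → ℝ,
      (∀ n : ℤ, |n| ≤ 2 * N → |b n| ≤ ε) →
      (∀ n : ℤ, |n| ≤ 2 * N → |∑ k ∈ Finset.Icc (-(2 * N : ℤ)) n, b k| ≤ ε) →
      ∀ x : ℝ, |x| ≤ N →
        |∑ n ∈ Finset.Icc (-(2 * N : ℤ)) (2 * N), (-1 : ℝ) ^ n * b n * _root_.sinc (x - n)|
          ≤ C * ε := by
  refine ⟨12, by norm_num, ?_⟩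
  intro N ε hε b hb hB x hx
  set y : ℝ := x + 2 * N with hy
  set G : ℕ → ℝ := fun k => (-1 : ℝ) ^ k * _root_.sinc (y - k) with hG
  set c : ℕ → ℝ := fun k => b ((k : ℤ) - 2 * N) with hc
  have h1 : ∑ n ∈ Finset.Icc (-(2 * N : ℤ)) (2 * N), (-1 : ℝ) ^ n * b n * _root_.sinc (x - n)
      = ∑ k ∈ Finset.range (4 * N + 1), G k * c k := by
    nth_rewrite 2 [show (2 * N : ℤ) = ((4 * N : ℕ) : ℤ) - 2 * N by push_cast; ring]
    rw [reindex N (fun n => (-1 : ℝ) ^ n * b n * _root_.sinc (x - n)) (4 * N)]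
    apply Finset.sum_congr rfl
    intro k _
    simp only [hG, hc]
    have hpow : (-1 : ℝ) ^ ((k : ℤ) - 2 * N) = (-1 : ℝ) ^ k := by
      rw [zpow_sub₀ (by norm_num : (-1:ℝ) ≠ 0), zpow_natCast]
      have h2 : (-1 : ℝ) ^ (2 * (N:ℤ)) = 1 := by
        rw [show (2 * (N:ℤ)) = ((2 * N : ℕ) : ℤ) by push_cast; ring, zpow_natCast]
        simp [pow_mul]
      rw [h2]
      simp
    have harg : x - (((k : ℤ) - 2 * N : ℤ) : ℝ) = y - k := by
      push_cast
      rw [hy]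
      ring
    rw [hpow, harg]
    ring
  rw [h1]
  have habel := Finset.sum_range_by_parts G c (4 * N + 1)
  simp only [smul_eq_mul, Nat.add_sub_cancel] at habel
  rw [habel]
  have hS : ∀ j : ℕ, j ≤ 4 * N → |∑ k ∈ Finset.range (j + 1), c k| ≤ ε := by
    intro j hj
    have h := reindex N b j
    have h' : ∑ k ∈ Finset.range (j + 1), c k
        = ∑ n ∈ Finset.Icc (-(2 * N : ℤ)) ((j : ℤ) - 2 * N), b n := by
      rw [h]
    rw [h']
    apply hB
    rw [abs_le]
    constructor <;> omega
  have hGb : ∀ k : ℕ, |G k| ≤ 1 := by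
    intro k
    simp only [hG]
    rw [abs_mul, abs_pow, abs_neg, abs_one, one_pow, one_mul]
    exact sinc_abs_le_one _
  have hGd : ∀ i : ℕ, |G (i + 1) - G i| = |_root_.sinc (y - i) + _root_.sinc (y - i - 1)| := by
    intro i
    calc |G (i + 1) - G i|
        = |(-1 : ℝ) ^ (i + 1) * (_root_.sinc (y - i) + _root_.sinc (y - i - 1))| := by
          congr 1
          simp only [hG]
          rw [show y - ((i + 1 : ℕ) : ℝ) = y - (i : ℝ) - 1 by push_cast; ring, pow_succ]
          ring
      _ = |_root_.sinc (y - i) + _root_.sinc (y - i - 1)| := by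
          rw [abs_mul, abs_pow, abs_neg, abs_one, one_pow, one_mul]
  calc |G (4 * N) * ∑ k ∈ Finset.range (4 * N + 1), c k
        - ∑ i ∈ Finset.range (4 * N), (G (i + 1) - G i) * ∑ k ∈ Finset.range (i + 1), c k|
      ≤ |G (4 * N) * ∑ k ∈ Finset.range (4 * N + 1), c k|
        + |∑ i ∈ Finset.range (4 * N), (G (i + 1) - G i) * ∑ k ∈ Finset.range (i + 1), c k| :=
        abs_sub _ _
    _ ≤ 1 * ε + ∑ i ∈ Finset.range (4 * N), |_root_.sinc (y - i) + _root_.sinc (y - i - 1)| * ε := by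
        gcongr ?_ + ?_
        · rw [abs_mul]
          exact mul_le_mul (hGb _) (hS (4 * N) le_rfl) (abs_nonneg _) zero_le_one
        · calc |∑ i ∈ Finset.range (4 * N), (G (i + 1) - G i) * ∑ k ∈ Finset.range (i + 1), c k|
              ≤ ∑ i ∈ Finset.range (4 * N), |(G (i + 1) - G i) * ∑ k ∈ Finset.range (i + 1), c k| :=
              Finset.abs_sum_le_sum_abs _ _
            _ ≤ ∑ i ∈ Finset.range (4 * N), |_root_.sinc (y - i) + _root_.sinc (y - i - 1)| * ε := by
              apply Finset.sum_le_sum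
              intro i hi
              simp only [Finset.mem_range] at hi
              rw [abs_mul, hGd i]
              exact mul_le_mul_of_nonneg_left (hS i (by omega)) (abs_nonneg _)
    _ ≤ 1 * ε + 10 * ε := by
        gcongr ?_ + ?_
        · exact le_rfl
        · rw [← Finset.sum_mul]
          exact mul_le_mul_of_nonneg_right (key_sum y (4 * N)) hε.le
    _ ≤ 12 * ε := by linarith
end

section
/- For every ε > 0 and every natural number N ≥ 1, the Euclidean volume of the set V_N = {(x₁,…,x_N) ∈ ℝᴺ : |x₁ + ⋯ + x_k| ≤ ε for all 1 ≤ k ≤ N, and |x_i| ≤ ε for all i} is at least εᴺ. -/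
/-
The partial-sum map `x ↦ (∑_{i ≤ k} x i)_k` is given by a lower unitriangular matrix, so it
preserves Lebesgue measure. The preimage of the cube `[0, ε]ᴺ` under it lies in `V_N`: its partial
sums lie in `[0, ε]`, and each coordinate `x k` is the difference of two numbers in `[0, ε]`
(the partial sums up to `k` and strictly below `k`).
-/

open MeasureTheory Finset

section PartialSums

variable {ι : Type*} [Fintype ι] [LinearOrder ι]

theorem sum_filter_le_eq_add_sum_filter_lt {M : Type*} [AddCommMonoid M] (x : ι → M) (k : ι) :
    ∑ i ∈ univ.filter (· ≤ k), x i = x k + ∑ i ∈ univ.filter (· < k), x i := by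
  have hsplit : univ.filter (· ≤ k) = insert k (univ.filter (· < k)) := by
    ext i
    simp [le_iff_lt_or_eq, or_comm]
  rw [hsplit, sum_insert (by simp)]

theorem abs_le_of_forall_sum_filter_le_mem_Icc {x : ι → ℝ} {ε : ℝ}
    (h : ∀ k, ∑ i ∈ univ.filter (· ≤ k), x i ∈ Set.Icc 0 ε) (k : ι) : |x k| ≤ ε := by
  have hlt : ∑ i ∈ univ.filter (· < k), x i ∈ Set.Icc 0 ε := by
    rcases (univ.filter (· < k)).eq_empty_or_nonempty with hempty | hne
    · rw [hempty, sum_empty]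
      exact ⟨le_rfl, (h k).1.trans (h k).2⟩
    · have hfilter : univ.filter (· < k) = univ.filter (· ≤ (univ.filter (· < k)).max' hne) := by
        ext i
        simp only [mem_filter, mem_univ, true_and]
        exact ⟨fun hi => le_max' _ i (mem_filter.2 ⟨mem_univ i, hi⟩),
          fun hi => hi.trans_lt (mem_filter.1 (max'_mem _ hne)).2⟩
      rw [hfilter]
      exact h _
  have hk := h k
  rw [sum_filter_le_eq_add_sum_filter_lt] at hk
  simpa using abs_sub_le_of_nonneg_of_le hk.1 hk.2 hlt.1 hlt.2

def partialSums (R ι : Type*) [CommRing R] [Fintype ι] [LinearOrder ι] :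
    (ι → R) →ₗ[R] (ι → R) :=
  Matrix.toLin' (Matrix.of fun k i => if i ≤ k then 1 else 0)

variable {R : Type*} [CommRing R]

theorem partialSums_apply (x : ι → R) (k : ι) :
    partialSums R ι x k = ∑ i ∈ univ.filter (· ≤ k), x i := by
  simp [partialSums, Matrix.mulVec, dotProduct, sum_filter]

theorem det_partialSums : LinearMap.det (partialSums R ι) = 1 := by
  rw [partialSums, LinearMap.det_toLin', Matrix.det_of_isLowerTriangular]
  · simp
  · intro i j hij
    simp [not_le.2 (OrderDual.toDual_lt_toDual.1 hij)]

theorem volume_preimage_partialSums (s : Set (ι → ℝ)) :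
    volume (partialSums ℝ ι ⁻¹' s) = volume s := by
  have hdet : LinearMap.det (partialSums ℝ ι) ≠ 0 := by simp [det_partialSums]
  simp [Measure.addHaar_preimage_linearMap volume hdet s, det_partialSums]

theorem preimage_partialSums_pi_Icc_subset (ε : ℝ) :
    partialSums ℝ ι ⁻¹' Set.univ.pi (fun _ => Set.Icc 0 ε) ⊆
      {x | (∀ i, |x i| ≤ ε) ∧ ∀ k, |∑ i ∈ univ.filter (· ≤ k), x i| ≤ ε} := by
  intro x hx
  have hsums : ∀ k, ∑ i ∈ univ.filter (· ≤ k), x i ∈ Set.Icc 0 ε := fun k => by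
    simpa [partialSums_apply] using hx k (Set.mem_univ k)
  exact ⟨abs_le_of_forall_sum_filter_le_mem_Icc hsums,
    fun k => (abs_of_nonneg (hsums k).1).trans_le (hsums k).2⟩

end PartialSums

theorem volume_VN_ge_general (ε : ℝ) (hε : 0 < ε) (N : ℕ) :
    ENNReal.ofReal (ε ^ N) ≤
      volume {x : Fin N → ℝ |
        (∀ i, |x i| ≤ ε) ∧
        ∀ k : Fin N, |∑ i ∈ Finset.univ.filter (· ≤ k), x i| ≤ ε} :=
  calc ENNReal.ofReal (ε ^ N) = volume (Set.univ.pi fun _ : Fin N => Set.Icc 0 ε) := by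
        rw [volume_pi_pi]
        simp [Real.volume_Icc, ENNReal.ofReal_pow hε.le]
    _ = volume (partialSums ℝ (Fin N) ⁻¹' Set.univ.pi fun _ => Set.Icc 0 ε) :=
        (volume_preimage_partialSums _).symm
    _ ≤ _ := measure_mono (preimage_partialSums_pi_Icc_subset ε)

theorem volume_VN_ge (ε : ℝ) (hε : 0 < ε) (N : ℕ) (hN : 1 ≤ N) :
    ENNReal.ofReal (ε ^ N) ≤
      volume {x : Fin N → ℝ |
        (∀ i, |x i| ≤ ε) ∧
        ∀ k : Fin N, |∑ i ∈ Finset.univ.filter (· ≤ k), x i| ≤ ε} :=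
  volume_VN_ge_general ε hε N
end

section
/- For every ε > 0 and N ≥ 2, Vol(V_N) ≥ ε · Vol(V_{N−1}), where V_N = {(x₁,…,x_N) ∈ ℝᴺ : |x_i| ≤ ε for all i and |x₁ + ⋯ + x_k| ≤ ε for all 1 ≤ k ≤ N} and V_{N−1} is the analogous set in ℝ^{N−1}. -/
/-!
Write a point of `ℝᴺ` as `(y, t)` with `y ∈ ℝᴺ⁻¹`. It lies in `V_N` iff `y ∈ V_{N-1}`, `|t| ≤ ε`
and `|s + t| ≤ ε`, where `s = y₁ + ⋯ + y_{N-1}` satisfies `|s| ≤ ε`. Whatever the sign of `s`,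
this fibre contains an interval of length `ε` (`[-ε, 0]` if `s ≥ 0`, `[0, ε]` if `s ≤ 0`), so
Tonelli gives `Vol(V_N) ≥ ε · Vol(V_{N-1})`.
-/

open MeasureTheory

/-- The solid `V_N ⊆ ℝᴺ` from the volume lemma. -/
def Vset (ε : ℝ) (N : ℕ) : Set (Fin N → ℝ) :=
  {x | (∀ i, |x i| ≤ ε) ∧ ∀ k : Fin N, |∑ i ∈ Finset.univ.filter (· ≤ k), x i| ≤ ε}

theorem measure_pi_eq_lintegral_measure_snoc {α : Type*} [MeasurableSpace α] (μ : Measure α)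
    [SigmaFinite μ] {n : ℕ} {S : Set (Fin (n + 1) → α)} (hS : MeasurableSet S) :
    Measure.pi (fun _ => μ) S = ∫⁻ y, μ {t | Fin.snoc y t ∈ S} ∂Measure.pi (fun _ => μ) := by
  let e := MeasurableEquiv.piFinSuccAbove (fun _ : Fin (n + 1) => α) (Fin.last n)
  rw [← ((measurePreserving_piFinSuccAbove (fun _ => μ) (Fin.last n)).symm e).measure_preimage
    hS.nullMeasurableSet, Measure.prod_apply_symm (hS.preimage e.symm.measurable)]
  congr! with y
  ext t
  simp [e, MeasurableEquiv.piFinSuccAbove_symm_apply, Fin.snocEquiv]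

theorem ofReal_le_volume_setOf_abs_le_and_abs_add_le {ε s : ℝ} (hs : |s| ≤ ε) :
    ENNReal.ofReal ε ≤ volume {t : ℝ | |t| ≤ ε ∧ |s + t| ≤ ε} := by
  obtain ⟨hs₁, hs₂⟩ := abs_le.mp hs
  obtain ⟨a, ha⟩ : ∃ a, Set.Icc a (a + ε) ⊆ {t : ℝ | |t| ≤ ε ∧ |s + t| ≤ ε} := by
    rcases le_total 0 s with h | h
    · refine ⟨-ε, fun t ht => ?_⟩
      simp only [Set.mem_ofPred_eq, abs_le]
      constructor <;> constructor <;> linarith [ht.1, ht.2]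
    · refine ⟨0, fun t ht => ?_⟩
      simp only [Set.mem_ofPred_eq, abs_le]
      constructor <;> constructor <;> linarith [ht.1, ht.2]
  calc ENNReal.ofReal ε = volume (Set.Icc a (a + ε)) := by simp
    _ ≤ _ := measure_mono ha

theorem measurableSet_Vset (ε : ℝ) (N : ℕ) : MeasurableSet (Vset ε N) := by
  simp only [Vset, Set.ofPred_and, Set.ofPred_forall]
  exact .inter (.iInter fun i => measurableSet_le (by fun_prop) measurable_const)
    (.iInter fun k => measurableSet_le (by fun_prop) measurable_const)

theorem snoc_mem_Vset_iff {ε : ℝ} {n : ℕ} {y : Fin n → ℝ} {t : ℝ} :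
    Fin.snoc y t ∈ Vset ε (n + 1) ↔ y ∈ Vset ε n ∧ |t| ≤ ε ∧ |∑ i, y i + t| ≤ ε := by
  simp only [Vset, Fin.forall_fin_succ', Finset.sum_filter, Fin.sum_univ_castSucc,
    Fin.last_le_iff, Fin.castSucc_le_castSucc_iff, Fin.castSucc_ne_last, ↓reduceIte, add_zero,
    (Fin.castSucc_lt_last _).le, Set.mem_ofPred_eq, Fin.snoc_castSucc, Fin.snoc_last]
  tauto

theorem abs_sum_le_of_mem_Vset {ε : ℝ} {n : ℕ} {y : Fin (n + 1) → ℝ}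
    (hy : y ∈ Vset ε (n + 1)) : |∑ i, y i| ≤ ε := by
  simpa [Finset.filter_true_of_mem fun i _ => Fin.le_last i] using hy.2 (Fin.last n)

theorem volume_VN_recursion_general (ε : ℝ) (N : ℕ) (hN : 2 ≤ N) :
    ENNReal.ofReal ε * volume (Vset ε (N - 1)) ≤ volume (Vset ε N) := by
  obtain ⟨n, rfl⟩ : ∃ n, N = n + 2 := ⟨N - 2, by omega⟩
  calc ENNReal.ofReal ε * volume (Vset ε (n + 1))
      = ∫⁻ y, (Vset ε (n + 1)).indicator (fun _ => ENNReal.ofReal ε) y := by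
        rw [lintegral_indicator_const (measurableSet_Vset ε _), mul_comm]
    _ ≤ ∫⁻ y, volume {t | Fin.snoc y t ∈ Vset ε (n + 2)} := by
        refine lintegral_mono fun y => ?_
        by_cases hy : y ∈ Vset ε (n + 1)
        · simpa only [Set.indicator_of_mem hy, snoc_mem_Vset_iff, hy, true_and]
            using ofReal_le_volume_setOf_abs_le_and_abs_add_le (abs_sum_le_of_mem_Vset hy)
        · simp [hy]
    _ = volume (Vset ε (n + 2)) :=
        (measure_pi_eq_lintegral_measure_snoc volume (measurableSet_Vset ε _)).symm

theorem volume_VN_recursion (ε : ℝ) (hε : 0 < ε) (N : ℕ) (hN : 2 ≤ N) :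
    ENNReal.ofReal ε * volume (Vset ε (N - 1)) ≤ volume (Vset ε N) :=
  volume_VN_recursion_general ε N hN
end

section
/- Let ε ∈ (0,1) and let (a_n)_{−2N ≤ n ≤ 2N} be i.i.d. real N(0,1) variables. Let E be the event that |a_n − 1| ≤ ε for all |n| ≤ 2N and |∑_{k=−2N}^{n} (a_k − 1)(−1)^k| ≤ ε for all |n| ≤ 2N. Then there is a constant c = c(ε) > 0 (independent of N) with P(E) ≥ e^{−cN} for all N ≥ 1. -/
/-!
Write `S_m = ∑_{i<m} (a_{i-2N} - 1)(-1)^i`. The event contains `{|S_m| ≤ ε/2 for all m ≤ 4N+1}`,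
since every `a_n - 1` is `±(S_{m+1} - S_m)`. The `S_m` form a random walk with independent Gaussian
steps: given `|S_m| ≤ ε/2`, the condition `|S_{m+1}| ≤ ε/2` asks the next Gaussian to fall in an
interval of length `ε` centred within `1 + ε/2` of the origin, which has probability at least
`p = ε φ(1 + ε)`, `φ` the standard Gaussian density. Multiplying over the `4N+1` steps gives
`P(E) ≥ p^(4N+1) ≥ e^(-cN)` with `c = 5 log (1/p)`.
-/

open MeasureTheory ProbabilityTheory

lemma gaussianPDFReal_le_of_abs_sub_le {μ : ℝ} {v : NNReal} {x y : ℝ} (h : |x - μ| ≤ |y - μ|) :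
    gaussianPDFReal μ v y ≤ gaussianPDFReal μ v x := by
  unfold gaussianPDFReal
  gcongr ?_ * Real.exp (-?_ / _)
  exact sq_le_sq.mpr h

lemma gaussianPDFReal_zero_one_lt_one (x : ℝ) : gaussianPDFReal 0 1 x < 1 := by
  refine (gaussianPDFReal_le_of_abs_sub_le (x := 0) (by simp)).trans_lt ?_
  have hsqrt : 1 < √(2 * Real.pi) := by
    rw [Real.lt_sqrt zero_le_one]; linarith [Real.pi_gt_three]
  simpa [gaussianPDFReal] using inv_lt_one_of_one_lt₀ hsqrt

lemma ofReal_mul_le_gaussianReal_Icc {μ : ℝ} {v : NNReal} (hv : v ≠ 0) {c r y : ℝ}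
    (hy : |c - μ| + r ≤ |y - μ|) :
    ENNReal.ofReal (2 * r * gaussianPDFReal μ v y)
      ≤ gaussianReal μ v (Set.Icc (c - r) (c + r)) := by
  have hdensity : ∀ x ∈ Set.Icc (c - r) (c + r),
      ENNReal.ofReal (gaussianPDFReal μ v y) ≤ gaussianPDF μ v x := fun x hx =>
    ENNReal.ofReal_le_ofReal <| gaussianPDFReal_le_of_abs_sub_le <| by
      calc |x - μ| ≤ |x - c| + |c - μ| := abs_sub_le x c μ
        _ ≤ r + |c - μ| := by
          gcongr; exact abs_sub_le_iff.mpr ⟨by linarith [hx.2], by linarith [hx.1]⟩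
        _ ≤ |y - μ| := by linarith
  calc ENNReal.ofReal (2 * r * gaussianPDFReal μ v y)
      = ∫⁻ _ in Set.Icc (c - r) (c + r), ENNReal.ofReal (gaussianPDFReal μ v y) := by
        rw [setLIntegral_const, Real.volume_Icc,
          ← ENNReal.ofReal_mul (gaussianPDFReal_nonneg _ _ _)]
        ring_nf
    _ ≤ ∫⁻ x in Set.Icc (c - r) (c + r), gaussianPDF μ v x :=
        setLIntegral_mono (measurable_gaussianPDF μ v) hdensity
    _ = _ := (gaussianReal_apply μ hv _).symm

lemma mul_measure_le_pi_of_forall_snoc {α : Type*} [MeasurableSpace α] (ν : Measure α)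
    [SigmaFinite ν] {n : ℕ} {A : Set (Fin n → α)} {B : Set (Fin (n + 1) → α)}
    (hA : MeasurableSet A) (hB : MeasurableSet B) {p : ENNReal}
    (h : ∀ x ∈ A, p ≤ ν {t | Fin.snoc x t ∈ B}) :
    p * Measure.pi (fun _ => ν) A ≤ Measure.pi (fun _ => ν) B := by
  have e := (measurePreserving_piFinSuccAbove (fun _ : Fin (n + 1) => ν) (Fin.last n)).symm
  rw [← e.measure_preimage_equiv B, Measure.prod_apply_symm (e.measurable hB),
    ← setLIntegral_const]
  refine (setLIntegral_mono' hA fun x hx => ?_).trans (setLIntegral_le_lintegral _ _)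
  convert h x hx using 3
  ext t
  simp [Fin.snocEquiv]

lemma map_fun_comp_eq_pi_of_iIndepFun {Ω ι κ β : Type*} [MeasurableSpace Ω] [MeasurableSpace β]
    [Fintype κ] {P : Measure Ω} [IsProbabilityMeasure P] {X : ι → Ω → β} {ν : Measure β} [NeZero ν]
    (hX : iIndepFun X P) (hlaw : ∀ i, P.map (X i) = ν) {g : κ → ι} (hg : g.Injective) :
    P.map (fun ω k => X (g k) ω) = Measure.pi fun _ => ν := by
  have hmeas : ∀ i, AEMeasurable (X i) P := fun i =>
    .of_map_ne_zero (by rw [hlaw i]; exact NeZero.ne ν)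
  rw [(iIndepFun_iff_map_fun_eq_pi_map fun k => hmeas (g k)).mp (hX.precomp hg)]
  simp only [hlaw]

def altWalk {n : ℕ} (x : Fin n → ℝ) (m : ℕ) : ℝ :=
  ∑ i : Fin n with i.val < m, (x i - 1) * (-1) ^ i.val

lemma altWalk_snoc {n : ℕ} (x : Fin n → ℝ) (t : ℝ) (m : ℕ) :
    altWalk (Fin.snoc x t : Fin (n + 1) → ℝ) m
      = altWalk x m + if n < m then (t - 1) * (-1) ^ n else 0 := by
  simp only [altWalk, Finset.sum_filter, Fin.sum_univ_castSucc, Fin.snoc_castSucc, Fin.snoc_last,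
    Fin.val_castSucc, Fin.val_last]

def altWalkBounded (r : ℝ) (n : ℕ) : Set (Fin n → ℝ) :=
  {x | ∀ m ≤ n, |altWalk x m| ≤ r}

lemma altWalk_of_le {n m : ℕ} (x : Fin n → ℝ) (h : n ≤ m) : altWalk x m = altWalk x n := by
  simp only [altWalk]
  rw [Finset.filter_true_of_mem fun i _ => by omega, Finset.filter_true_of_mem fun i _ => i.isLt]

lemma measurableSet_altWalkBounded (r : ℝ) (n : ℕ) : MeasurableSet (altWalkBounded r n) := by
  simp only [altWalkBounded, Set.ofPred_forall]
  refine .iInter fun m => .iInter fun _ => measurableSet_le ?_ measurable_const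
  unfold altWalk
  fun_prop

lemma Icc_subset_snoc_mem_altWalkBounded {r : ℝ} {n : ℕ} {x : Fin n → ℝ}
    (hx : x ∈ altWalkBounded r n) :
    Set.Icc (1 - (-1) ^ n * altWalk x n - r) (1 - (-1) ^ n * altWalk x n + r)
      ⊆ {t | Fin.snoc x t ∈ altWalkBounded r (n + 1)} := by
  intro t ht m hm
  rw [altWalk_snoc]
  rcases Nat.lt_or_ge n m with hnm | hmn
  · have hσ : ((-1 : ℝ) ^ n) * (-1) ^ n = 1 := by rw [← mul_pow]; norm_num
    have hlast : altWalk x n + (t - 1) * (-1) ^ n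
        = (-1) ^ n * (t - (1 - (-1) ^ n * altWalk x n)) := by
      linear_combination (-altWalk x n) * hσ
    rw [if_pos hnm, altWalk_of_le x hnm.le, hlast, abs_mul, abs_neg_one_pow, one_mul, abs_le]
    constructor <;> linarith [ht.1, ht.2]
  · rw [if_neg (by omega), add_zero]
    exact hx m hmn

theorem ofReal_pow_le_pi_gaussianReal_altWalkBounded {r : ℝ} (hr : 0 ≤ r) (n : ℕ) :
    ENNReal.ofReal (2 * r * gaussianPDFReal 0 1 (1 + 2 * r)) ^ n
      ≤ Measure.pi (fun _ => gaussianReal 0 1) (altWalkBounded r n) := by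
  induction n with
  | zero =>
    have huniv : altWalkBounded r 0 = Set.univ :=
      Set.eq_univ_of_forall fun x m _ => by simpa [altWalk] using hr
    simp [huniv]
  | succ n ih =>
    rw [pow_succ']
    refine (mul_le_mul_right ih _).trans <| mul_measure_le_pi_of_forall_snoc _
      (measurableSet_altWalkBounded r n) (measurableSet_altWalkBounded r (n + 1)) fun x hx => ?_
    refine (ofReal_mul_le_gaussianReal_Icc one_ne_zero ?_).trans
      (measure_mono (Icc_subset_snoc_mem_altWalkBounded hx))
    have hcentre : |1 - (-1) ^ n * altWalk x n| ≤ 1 + r := by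
      calc |1 - (-1) ^ n * altWalk x n| ≤ |(1 : ℝ)| + |(-1) ^ n * altWalk x n| := abs_sub _ _
        _ ≤ 1 + r := by rw [abs_one, abs_mul, abs_neg_one_pow, one_mul]; linarith [hx n le_rfl]
    rw [sub_zero, sub_zero, abs_of_nonneg (by linarith : (0 : ℝ) ≤ 1 + 2 * r)]
    linarith

lemma altWalk_eq_sum_range {n m : ℕ} (y : ℕ → ℝ) (hm : m ≤ n) :
    altWalk (fun i : Fin n => y i) m = ∑ i ∈ Finset.range m, (y i - 1) * (-1) ^ i := by
  rw [altWalk, Finset.sum_filter,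
    Fin.sum_univ_eq_sum_range (fun i => if i < m then (y i - 1) * (-1) ^ i else 0),
    ← Finset.sum_filter]
  congr 1
  ext i
  simp only [Finset.mem_filter, Finset.mem_range]
  omega

lemma abs_sub_one_le_of_abs_altSum_le {y : ℕ → ℝ} {r : ℝ} {i : ℕ}
    (h : ∀ m ≤ i + 1, |∑ j ∈ Finset.range m, (y j - 1) * (-1) ^ j| ≤ r) : |y i - 1| ≤ 2 * r := by
  set S := fun m => ∑ j ∈ Finset.range m, (y j - 1) * (-1 : ℝ) ^ j
  have hstep : S (i + 1) - S i = (y i - 1) * (-1) ^ i := by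
    simp only [S, Finset.sum_range_succ, add_sub_cancel_left]
  calc |y i - 1| = |S (i + 1) - S i| := by rw [hstep, abs_mul, abs_neg_one_pow, mul_one]
    _ ≤ |S (i + 1)| + |S i| := abs_sub _ _
    _ ≤ 2 * r := by linarith [h (i + 1) le_rfl, h i (Nat.le_succ i)]

lemma sum_Icc_neg_even_eq_sum_range (f : ℤ → ℝ) (N : ℕ) (n : ℤ) :
    ∑ k ∈ Finset.Icc (-(2 * N : ℤ)) n, f k * (-1) ^ k
      = ∑ i ∈ Finset.range (n + 2 * N + 1).toNat, f (-(2 * N) + i) * (-1) ^ i := by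
  rw [Int.Icc_eq_finset_map, Finset.sum_map]
  refine Finset.sum_congr (by congr 2; ring) fun i _ => ?_
  simp [zpow_add₀, zpow_neg, zpow_mul]

lemma abs_sub_one_le_and_abs_sum_Icc_le_of_mem_altWalkBounded {a : ℤ → ℝ} {ε : ℝ} {N : ℕ}
    (h : (fun i : Fin (4 * N + 1) => a (-(2 * N) + i)) ∈ altWalkBounded (ε / 2) (4 * N + 1)) :
    (∀ n : ℤ, |n| ≤ 2 * N → |a n - 1| ≤ ε) ∧
      (∀ n : ℤ, |n| ≤ 2 * N →
        |∑ k ∈ Finset.Icc (-(2 * N : ℤ)) n, (a k - 1) * (-1 : ℝ) ^ k| ≤ ε) := by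
  have hsum : ∀ m ≤ 4 * N + 1,
      |∑ i ∈ Finset.range m, (a (-(2 * N) + i) - 1) * (-1) ^ i| ≤ ε / 2 := fun m hm => by
    simpa only [altWalk_eq_sum_range (fun i : ℕ => a (-(2 * N) + i)) hm] using h m hm
  have hε : 0 ≤ ε / 2 := (abs_nonneg _).trans (hsum 0 (Nat.zero_le _))
  refine ⟨fun n hn => ?_, fun n hn => ?_⟩
  · rw [abs_le] at hn
    obtain ⟨i, rfl⟩ : ∃ i : ℕ, n = -(2 * N) + i := ⟨(n + 2 * N).toNat, by omega⟩
    have := abs_sub_one_le_of_abs_altSum_le (y := fun i : ℕ => a (-(2 * N) + i)) (i := i)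
      fun m hm => hsum m (by omega)
    linarith
  · rw [abs_le] at hn
    rw [sum_Icc_neg_even_eq_sum_range]
    linarith [hsum _ (by omega : (n + 2 * N + 1).toNat ≤ 4 * N + 1)]

lemma exp_neg_mul_log_inv_le_pow {p : ℝ} (hp0 : 0 < p) (hp1 : p < 1) {N : ℕ} (hN : 1 ≤ N) :
    Real.exp (-(5 * Real.log p⁻¹) * N) ≤ p ^ (4 * N + 1) := by
  have hexponent : -(5 * Real.log p⁻¹) * N = ((5 * N : ℕ) : ℝ) * Real.log p := by
    rw [Real.log_inv]; push_cast; ring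
  rw [hexponent, Real.exp_nat_mul, Real.exp_log hp0]
  exact pow_le_pow_of_le_one hp0.le hp1.le (by omega)

theorem event_E_probability (ε : ℝ) (hε0 : 0 < ε) (hε1 : ε < 1) :
    ∃ c > (0 : ℝ), ∀ (Ω : Type) (_ : MeasureSpace Ω),
      IsProbabilityMeasure (ℙ : Measure Ω) →
      ∀ a : ℤ → Ω → ℝ,
        iIndepFun a ℙ →
        (∀ n, Measure.map (a n) ℙ = gaussianReal 0 1) →
        ∀ N : ℕ, 1 ≤ N →
          ENNReal.ofReal (Real.exp (-c * N)) ≤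
            ℙ {ω | (∀ n : ℤ, |n| ≤ 2 * N → |a n ω - 1| ≤ ε) ∧
                   (∀ n : ℤ, |n| ≤ 2 * N →
                     |∑ k ∈ Finset.Icc (-(2 * N : ℤ)) n, (a k ω - 1) * (-1 : ℝ) ^ k| ≤ ε)} := by
  set r := ε / 2 with hr
  set p := 2 * r * gaussianPDFReal 0 1 (1 + 2 * r)
  have hp0 : 0 < p := mul_pos (by positivity) (gaussianPDFReal_pos _ _ _ one_ne_zero)
  have hp1 : p < 1 := by
    simpa using mul_lt_mul'' (by linarith : 2 * r < 1)
      (gaussianPDFReal_zero_one_lt_one (1 + 2 * r)) (by positivity) (gaussianPDFReal_nonneg _ _ _)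
  refine ⟨5 * Real.log p⁻¹, mul_pos (by norm_num) (Real.log_pos (one_lt_inv_iff₀.mpr ⟨hp0, hp1⟩)),
    fun Ω _ _ a ha hlaw N hN => ?_⟩
  set block : Ω → Fin (4 * N + 1) → ℝ := fun ω i => a (-(2 * N) + i) ω
  have hblock : (ℙ : Measure Ω).map block = Measure.pi fun _ => gaussianReal 0 1 :=
    map_fun_comp_eq_pi_of_iIndepFun ha hlaw fun i j hij => Fin.ext (by simpa using hij)
  calc ENNReal.ofReal (Real.exp (-(5 * Real.log p⁻¹) * N))
      ≤ ENNReal.ofReal p ^ (4 * N + 1) := by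
        rw [← ENNReal.ofReal_pow hp0.le]
        exact ENNReal.ofReal_le_ofReal (exp_neg_mul_log_inv_le_pow hp0 hp1 hN)
    _ ≤ Measure.pi (fun _ => gaussianReal 0 1) (altWalkBounded r (4 * N + 1)) :=
        ofReal_pow_le_pi_gaussianReal_altWalkBounded (by positivity) _
    _ = ℙ (block ⁻¹' altWalkBounded r (4 * N + 1)) := by
        rw [← hblock, Measure.map_apply_of_aemeasurable
          (.of_map_ne_zero (by rw [hblock]; exact NeZero.ne _)) (measurableSet_altWalkBounded _ _)]
    _ ≤ _ := measure_mono fun ω hω =>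
        abs_sub_one_le_and_abs_sum_Icc_le_of_mem_altWalkBounded (a := (a · ω)) hω
end
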